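/- arXiv:1510.03149 — 2 statements merged into one kernel-verified Lean document; each statement's English description precedes it below -/
import Mathlib

section
/- Let w_i be an unassigned worker maximizing the ratio ΔS(w)/|X_w ∩ (Y_j \ Ỹ_j)| among all unassigned workers (where each unassigned worker w satisfies |X_w ∩ (Y_j \ Ỹ_j)| > 0), and suppose c_{ij} > B_j − c̃_j. Then for every subset R of unassigned workers whose skill sets jointly cover Y_j \ Ỹ_j (i.e., Y_j \ Ỹ_j ⊆ ⋃_{w∈R} X_w), the total cost ∑_{w∈R} c_{wj} exceeds the remaining budget B_j − c̃_j. -/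
/-- Pruning tasks with insufficient budgets: if the unassigned worker `i`
maximizing `ΔS(w)/|X_w ∩ (Y_j \ Ỹ_j)|` has cost exceeding the remaining budget,
then every covering subset of unassigned workers exceeds the remaining budget. -/
theorem prune_insufficient_budget_task
    {Ψ W : Type*} [DecidableEq Ψ] [DecidableEq W]
    (U : Finset W) (X : W → Finset Ψ) (c : W → ℝ)
    (Yj Ytil : Finset Ψ) (Bj ctil : ℝ)
    (hY : Yj.Nonempty) (hYt : Ytil ⊆ Yj) (hZ : (Yj \ Ytil).Nonempty)
    (hctil : 0 ≤ ctil)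
    (hXw : ∀ w ∈ U, (X w ∩ (Yj \ Ytil)).Nonempty)
    (hc : ∀ w ∈ U, 0 ≤ c w)
    (i : W) (hi : i ∈ U)
    (hmax : ∀ w ∈ U,
      Bj / (Yj.card : ℝ) - c i / ((X i ∩ (Yj \ Ytil)).card : ℝ) ≥
        Bj / (Yj.card : ℝ) - c w / ((X w ∩ (Yj \ Ytil)).card : ℝ))
    (hbudget : c i > Bj - ctil) :
    ∀ R ⊆ U, (Yj \ Ytil) ⊆ R.biUnion X → (∑ w ∈ R, c w) > Bj - ctil := by
  intro R hR hcov
  set Z := Yj \ Ytil with hZdef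
  have hki : (0:ℝ) < ((X i ∩ Z).card : ℝ) := by
    exact_mod_cast Finset.card_pos.mpr (hXw i hi)
  have hci : 0 ≤ c i := hc i hi
  have hlow : ∀ w ∈ R, c i * ((X w ∩ Z).card : ℝ) / ((X i ∩ Z).card : ℝ) ≤ c w := by
    intro w hw
    have hkw : (0:ℝ) < ((X w ∩ Z).card : ℝ) := by
      exact_mod_cast Finset.card_pos.mpr (hXw w (hR hw))
    have h1 := hmax w (hR hw)
    have h2 : c i / ((X i ∩ Z).card : ℝ) ≤ c w / ((X w ∩ Z).card : ℝ) := by linarith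
    rw [div_le_div_iff₀ hki hkw] at h2
    rw [div_le_iff₀ hki]
    linarith
  have hsub : Z ⊆ R.biUnion (fun w => X w ∩ Z) := by
    intro x hx
    obtain ⟨w, hw, hxw⟩ := Finset.mem_biUnion.mp (hcov hx)
    exact Finset.mem_biUnion.mpr ⟨w, hw, Finset.mem_inter.mpr ⟨hxw, hx⟩⟩
  have hsum : (Z.card : ℝ) ≤ ∑ w ∈ R, ((X w ∩ Z).card : ℝ) := by
    have h1 : Z.card ≤ ∑ w ∈ R, (X w ∩ Z).card :=
      le_trans (Finset.card_le_card hsub) (Finset.card_biUnion_le)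
    exact_mod_cast h1
  have hZi : ((X i ∩ Z).card : ℝ) ≤ (Z.card : ℝ) := by
    exact_mod_cast Finset.card_le_card (Finset.inter_subset_right)
  have hkey : c i ≤ ∑ w ∈ R, c w := by
    have h1 : c i ≤ ∑ w ∈ R, c i * ((X w ∩ Z).card : ℝ) / ((X i ∩ Z).card : ℝ) := by
      rw [← Finset.sum_div, ← Finset.mul_sum, le_div_iff₀ hki]
      nlinarith [mul_le_mul_of_nonneg_left (le_trans hZi hsum) hci]
    exact le_trans h1 (Finset.sum_le_sum hlow)
  linarith
end

section
/- For the greedy weighted set cover algorithm applied to a single task with required skill set Y of size N and worker skill sets with positive costs, the cost of the greedy solution is at most H(N) = ∑_{i=1}^{N} 1/i times the cost of an optimal cover. -/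
/-!
Charge the cost `c (sel t)` of the `t`-th greedy pick evenly to the `|X (sel t) ∩ U t|` elements it
newly covers, at price `q t = c (sel t) / |X (sel t) ∩ U t|`. Fix a worker `w` of a cover and let
`a t = |X w ∩ U t|`. Whenever `w` still has uncovered skills, greedy choice gives
`q t ≤ c w / a t`, so the `a t - a (t + 1)` elements of `X w` covered at step `t` are charged
at most `c w * (a t - a (t + 1)) / a t ≤ c w * (H (a t) - H (a (t + 1)))`. Telescoping, the
elements of `X w` are charged at most `c w * H N` in total, and summing over the cover bounds
the greedy cost.
-/

open Finset

lemma harmonic_mono : Monotone harmonic := fun _ _ h =>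
  sum_le_sum_of_subset_of_nonneg (range_subset_range.2 h) fun _ _ _ => by positivity

lemma harmonic_nonneg (n : ℕ) : 0 ≤ harmonic n :=
  harmonic_zero ▸ harmonic_mono n.zero_le

lemma cast_harmonic {K : Type*} [DivisionRing K] [CharZero K] (n : ℕ) :
    (harmonic n : K) = ∑ i ∈ range n, (1 : K) / (i + 1) := by
  simp [harmonic]

lemma div_le_harmonic_sub_harmonic {k n : ℕ} (hkn : k ≤ n) :
    (k : ℚ) / n ≤ harmonic n - harmonic (n - k) := by
  rw [harmonic, harmonic, ← sum_Ico_eq_sub _ (n.sub_le k)]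
  have hterm : ∀ i ∈ Ico (n - k) n, (n : ℚ)⁻¹ ≤ (↑(i + 1))⁻¹ := fun i hi => by
    have : i + 1 ≤ n := (mem_Ico.1 hi).2
    gcongr
  have hcount := card_nsmul_le_sum _ _ _ hterm
  rwa [Nat.card_Ico, Nat.sub_sub_self hkn, nsmul_eq_mul, ← div_eq_mul_inv] at hcount

lemma natCast_mul_le_mul_harmonic_sub {k n : ℕ} {q c : ℝ} (hkn : k ≤ n) (hc : 0 ≤ c)
    (hq : 0 < k → q ≤ c / n) : k * q ≤ c * (harmonic n - harmonic (n - k) : ℚ) := by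
  rcases k.eq_zero_or_pos with rfl | hk
  · simp
  calc (k : ℝ) * q ≤ k * (c / n) := by gcongr; exact hq hk
    _ = c * ((k / n : ℚ) : ℝ) := by push_cast; ring
    _ ≤ c * (harmonic n - harmonic (n - k) : ℚ) := by
      gcongr
      exact div_le_harmonic_sub_harmonic hkn

lemma card_le_sum_card_inter_of_subset_biUnion {α ι : Type*} [DecidableEq α] {s : Finset α}
    {K : Finset ι} {X : ι → Finset α} (hs : s ⊆ K.biUnion X) :
    #s ≤ ∑ w ∈ K, #(X w ∩ s) :=
  calc #s ≤ #(K.biUnion fun w => X w ∩ s) := card_le_card fun y hy => by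
        obtain ⟨w, hw, hyw⟩ := mem_biUnion.1 (hs hy)
        exact mem_biUnion.2 ⟨w, hw, mem_inter.2 ⟨hyw, hy⟩⟩
    _ ≤ ∑ w ∈ K, #(X w ∩ s) := card_biUnion_le

section Shrinking

variable {α : Type*} [DecidableEq α] {A U : ℕ → Finset α}

lemma antitone_of_eq_sdiff (hU : ∀ t, U (t + 1) = U t \ A t) : Antitone U :=
  antitone_nat_of_succ_le fun t => hU t ▸ sdiff_subset

lemma card_inter_inter_add_card_inter_succ (hU : ∀ t, U (t + 1) = U t \ A t)
    (S : Finset α) (t : ℕ) : #(S ∩ (A t ∩ U t)) + #(S ∩ U (t + 1)) = #(S ∩ U t) := by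
  rw [hU, ← inter_sdiff_assoc, add_comm, ← card_sdiff_add_card_inter (S ∩ U t) (A t)]
  congr 2
  ext
  simp only [mem_inter]
  tauto

lemma sum_card_inter_mul_le_mul_harmonic (hU : ∀ t, U (t + 1) = U t \ A t) (S : Finset α)
    {c : ℝ} (hc : 0 ≤ c) {q : ℕ → ℝ} {T : ℕ}
    (hq : ∀ t < T, (S ∩ U t).Nonempty → q t ≤ c / #(S ∩ U t)) :
    ∑ t ∈ range T, (#(S ∩ (A t ∩ U t)) : ℝ) * q t ≤ c * harmonic #(S ∩ U 0) := by
  set a : ℕ → ℕ := fun t => #(S ∩ U t)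
  have hstep : ∀ t ∈ range T, (#(S ∩ (A t ∩ U t)) : ℝ) * q t ≤
      c * (harmonic (a t) - harmonic (a (t + 1)) : ℚ) := fun t ht => by
    have hsplit := card_inter_inter_add_card_inter_succ hU S t
    have hnext : a (t + 1) = a t - #(S ∩ (A t ∩ U t)) := by simp only [a]; omega
    rw [hnext]
    refine natCast_mul_le_mul_harmonic_sub (by simp only [a]; omega) hc fun hk => ?_
    refine hq t (mem_range.1 ht) ((card_pos.1 hk).mono ?_)
    exact inter_subset_inter_left inter_subset_right
  calc ∑ t ∈ range T, (#(S ∩ (A t ∩ U t)) : ℝ) * q t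
      ≤ ∑ t ∈ range T, c * (harmonic (a t) - harmonic (a (t + 1)) : ℚ) := sum_le_sum hstep
    _ = c * (harmonic (a 0) - harmonic (a T) : ℚ) := by
      rw [← mul_sum]
      push_cast
      rw [sum_range_sub' fun t => (harmonic (a t) : ℝ)]
    _ ≤ c * harmonic (a 0) := by
      gcongr
      exact sub_le_self _ (harmonic_nonneg _)

end Shrinking

theorem greedy_set_cover_harmonic_bound_general
    {Ψ ι : Type*} [DecidableEq Ψ]
    (Y : Finset Ψ) (N : ℕ) (hN : Y.card = N)
    (X : ι → Finset Ψ) (c : ι → ℝ)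
    (hc : ∀ w, 0 < c w)
    (sel : ℕ → ι) (U : ℕ → Finset Ψ) (T : ℕ)
    (hU0 : U 0 = Y)
    (hUstep : ∀ t, U (t + 1) = U t \ X (sel t))
    (hgreedy : ∀ t < T, (X (sel t) ∩ U t).Nonempty ∧
      ∀ w : ι, (X w ∩ U t).Nonempty →
        c (sel t) / ((X (sel t) ∩ U t).card : ℝ) ≤
          c w / ((X w ∩ U t).card : ℝ)) :
    ∀ K : Finset ι, Y ⊆ K.biUnion X →
      (∑ t ∈ Finset.range T, c (sel t)) ≤
        (∑ i ∈ Finset.range N, (1 : ℝ) / (i + 1)) * ∑ w ∈ K, c w := by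
  intro K hK
  set C : ℕ → Finset Ψ := fun t => X (sel t) ∩ U t
  set q : ℕ → ℝ := fun t => c (sel t) / #(C t)
  have hcost : ∀ t ∈ range T, c (sel t) = #(C t) * q t := fun t ht => by
    have : (#(C t) : ℝ) ≠ 0 := by exact_mod_cast (card_pos.2 (hgreedy t (mem_range.1 ht)).1).ne'
    simp only [q]
    field_simp
  have hworker : ∀ w, ∑ t ∈ range T, (#(X w ∩ C t) : ℝ) * q t ≤ c w * harmonic N := fun w =>
    calc _ ≤ c w * harmonic #(X w ∩ U 0) := sum_card_inter_mul_le_mul_harmonic hUstep (X w)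
          (hc w).le fun t ht => (hgreedy t ht).2 w
      _ ≤ c w * harmonic N := by
        have hsize : #(X w ∩ U 0) ≤ N := hN ▸ hU0 ▸ card_le_card inter_subset_right
        exact mul_le_mul_of_nonneg_left (mod_cast harmonic_mono hsize) (hc w).le
  rw [← cast_harmonic]
  calc ∑ t ∈ range T, c (sel t) = ∑ t ∈ range T, (#(C t) : ℝ) * q t := sum_congr rfl hcost
    _ ≤ ∑ t ∈ range T, ∑ w ∈ K, (#(X w ∩ C t) : ℝ) * q t := by
      refine sum_le_sum fun t _ => ?_
      rw [← sum_mul]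
      gcongr
      · exact div_nonneg (hc _).le (Nat.cast_nonneg _)
      · exact_mod_cast card_le_sum_card_inter_of_subset_biUnion <| inter_subset_right.trans <|
          (antitone_of_eq_sdiff hUstep (Nat.zero_le t)).trans (hU0 ▸ hK)
    _ = ∑ w ∈ K, ∑ t ∈ range T, (#(X w ∩ C t) : ℝ) * q t := sum_comm
    _ ≤ ∑ w ∈ K, c w * harmonic N := sum_le_sum fun w _ => hworker w
    _ = harmonic N * ∑ w ∈ K, c w := by rw [mul_sum]; simp only [mul_comm]

/-- Greedy weighted set cover for a single task: if the greedy sequence `sel`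
always picks a worker minimizing `c_w / |X_w ∩ U|` over workers whose skills
intersect the uncovered set `U`, and covers `Y` after `T` steps, then its total
cost is at most `H(N)` times the cost of any cover of `Y`, where `N = |Y|`. -/
theorem greedy_set_cover_harmonic_bound
    {Ψ ι : Type*} [DecidableEq Ψ] [DecidableEq ι] [Fintype ι]
    (Y : Finset Ψ) (N : ℕ) (hN : Y.card = N) (hN1 : 1 ≤ N)
    (X : ι → Finset Ψ) (c : ι → ℝ)
    (hc : ∀ w, 0 < c w)
    (hXsub : ∀ w, X w ⊆ Y)
    (hcover : Y ⊆ Finset.univ.biUnion X)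
    (sel : ℕ → ι) (U : ℕ → Finset Ψ) (T : ℕ)
    (hU0 : U 0 = Y)
    (hUstep : ∀ t, U (t + 1) = U t \ X (sel t))
    (hT : U T = ∅)
    (hTmin : ∀ t < T, (U t).Nonempty)
    (hgreedy : ∀ t < T, (X (sel t) ∩ U t).Nonempty ∧
      ∀ w : ι, (X w ∩ U t).Nonempty →
        c (sel t) / ((X (sel t) ∩ U t).card : ℝ) ≤
          c w / ((X w ∩ U t).card : ℝ)) :
    ∀ K : Finset ι, Y ⊆ K.biUnion X →
      (∑ t ∈ Finset.range T, c (sel t)) ≤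
        (∑ i ∈ Finset.range N, (1 : ℝ) / (i + 1)) * ∑ w ∈ K, c w :=
  greedy_set_cover_harmonic_bound_general Y N hN X c hc sel U T hU0 hUstep hgreedy
end
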